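/- Let f, g and h be entire functions given by everywhere absolutely convergent vector valued Dirichlet series, and let p ≥ 0, q ≥ 0, m ≥ 0 be integers. Assume 0 < λ_h^{(m,p)}(g) ≤ ρ_h^{(m,p)}(g) < +∞. Then: (i) ρ_g^{(p,q)}(f) = 0 when ρ_h^{(m,q)}(f) = 0; (ii) λ_g^{(p,q)}(f) = 0 when λ_h^{(m,q)}(f) = 0; (iii) ρ_g^{(p,q)}(f) = +∞ when ρ_h^{(m,q)}(f) = +∞; and (iv) λ_g^{(p,q)}(f) = +∞ when λ_h^{(m,q)}(f) = +∞. -/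

import Mathlib

open Filter Topology

noncomputable section

/-- An entire function given by an everywhere absolutely convergent
vector valued Dirichlet series, with coefficients in a Banach space `E`. -/
structure VVDS (E : Type*) [NormedAddCommGroup E] [NormedSpace ℂ E] [CompleteSpace E] where
  a : ℕ → E
  lam : ℕ → ℝ
  lam_pos : ∀ n, 0 < lam n
  lam_strictMono : StrictMono lam
  lam_tendsto : Tendsto lam atTop atTop
  log_index_bound : ∃ D : ℝ, ∀ᶠ n : ℕ in atTop, Real.log (n : ℝ) / lam n ≤ D
  coeff_decay : Tendsto (fun n => Real.log ‖a n‖ / lam n) atTop atBot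
  abs_conv : ∀ s : ℂ, Summable (fun n => Real.exp (s.re * lam n) * ‖a n‖)

variable {E F G : Type*} [NormedAddCommGroup E] [NormedSpace ℂ E] [CompleteSpace E]
  [NormedAddCommGroup F] [NormedSpace ℂ F] [CompleteSpace F]
  [NormedAddCommGroup G] [NormedSpace ℂ G] [CompleteSpace G]

/-- The entire function defined by the vector valued Dirichlet series. -/
def VVDS.toFun (f : VVDS E) (s : ℂ) : E := ∑' n, Complex.exp (s * (f.lam n : ℂ)) • f.a n

/-- The maximum modulus function `M_f(σ) = sup_t ‖f(σ+it)‖`. -/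
def VVDS.M (f : VVDS E) (σ : ℝ) : ℝ := ⨆ t : ℝ, ‖f.toFun ((σ : ℂ) + (t : ℂ) * Complex.I)‖

/-- The inverse function of the maximum modulus function. -/
def VVDS.Minv (f : VVDS E) (y : ℝ) : ℝ := sInf {σ : ℝ | y ≤ f.M σ}

/-- The (p,q)-th relative Ritt order of `f` with respect to `g`. -/
def relRittOrder (p q : ℕ) (f : VVDS E) (g : VVDS F) : EReal :=
  limsup (fun σ : ℝ =>
    ((Real.log^[p] (g.Minv (f.M σ)) / Real.log^[q] σ : ℝ) : EReal)) atTop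

/-- The (p,q)-th relative Ritt lower order of `f` with respect to `g`. -/
def relRittLowerOrder (p q : ℕ) (f : VVDS E) (g : VVDS F) : EReal :=
  liminf (fun σ : ℝ =>
    ((Real.log^[p] (g.Minv (f.M σ)) / Real.log^[q] σ : ℝ) : EReal)) atTop

/-- The (p,q)-th relative Ritt type of `f` with respect to `g`. -/
def relRittType (p q : ℕ) (f : VVDS E) (g : VVDS F) : EReal :=
  limsup (fun σ : ℝ =>
    ((Real.log^[p-1] (g.Minv (f.M σ)) /
      (Real.log^[q-1] σ) ^ (relRittOrder p q f g).toReal : ℝ) : EReal)) atTop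

/-- The (p,q)-th relative Ritt lower type of `f` with respect to `g`. -/
def relRittLowerType (p q : ℕ) (f : VVDS E) (g : VVDS F) : EReal :=
  liminf (fun σ : ℝ =>
    ((Real.log^[p-1] (g.Minv (f.M σ)) /
      (Real.log^[q-1] σ) ^ (relRittOrder p q f g).toReal : ℝ) : EReal)) atTop

/-- The (p,q)-th relative Ritt weak type of `f` with respect to `g`. -/
def relRittWeakType (p q : ℕ) (f : VVDS E) (g : VVDS F) : EReal :=
  liminf (fun σ : ℝ =>
    ((Real.log^[p-1] (g.Minv (f.M σ)) /
      (Real.log^[q-1] σ) ^ (relRittLowerOrder p q f g).toReal : ℝ) : EReal)) atTop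

/-- The growth indicator `τ̄_g^{(p,q)}(f)`. -/
def relRittUpperWeakType (p q : ℕ) (f : VVDS E) (g : VVDS F) : EReal :=
  limsup (fun σ : ℝ =>
    ((Real.log^[p-1] (g.Minv (f.M σ)) /
      (Real.log^[q-1] σ) ^ (relRittLowerOrder p q f g).toReal : ℝ) : EReal)) atTop

/-!
Write `Φ_{g,f} = M_g⁻¹ ∘ M_f`. Since `M_g` is continuous and tends to `+∞`, `M_g (M_g⁻¹ y) = y`
for large `y`, so `Φ_{h,f} = Φ_{h,g} ∘ Φ_{g,f}` eventually, while `Φ_{g,f} → +∞`. The hypotheses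
on `g` give `l · log^[p] x ≤ log^[m] Φ_{h,g}(x) ≤ r · log^[p] x` for large `x`, with `0 < l ≤ r`.
Substituting `x = Φ_{g,f}(σ)` and dividing by `log^[q] σ`, the ratios defining the orders of `f`
relative to `g` and relative to `h` agree up to the factors `l` and `r`, so they vanish or are
infinite together.

The analytic input: by Bohr's mean value formula
`(2T)⁻¹ ∫_{-T}^{T} e^{-itλ_N} f(σ+it) dt → e^{σλ_N} a_N`, hence `e^{σλ_N} ‖a_N‖ ≤ M_f(σ)` and
`M_f → +∞`; and `M_f` is continuous because its increments are bounded by those of the continuous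
majorant `σ ↦ ∑ e^{σλₙ} ‖aₙ‖`.
-/

section IntervalMean

variable {V : Type*} [NormedAddCommGroup V] [NormedSpace ℝ V]

def intervalMean (φ : ℝ → V) (T : ℝ) : V := (2 * T)⁻¹ • ∫ t in -T..T, φ t

lemma norm_cexp_ofReal_mul_ofReal_mul_I (a t : ℝ) : ‖Complex.exp (a * t * Complex.I)‖ = 1 := by
  rw [← Complex.ofReal_mul, Complex.norm_exp_ofReal_mul_I]

lemma norm_intervalMean_le {φ : ℝ → V} {B T : ℝ} (hB : ∀ t, ‖φ t‖ ≤ B) (hT : 0 < T) :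
    ‖intervalMean φ T‖ ≤ B := by
  have hint : ‖∫ t in -T..T, φ t‖ ≤ B * (2 * T) := by
    simpa [show T - -T = 2 * T by ring, abs_of_pos hT] using
      intervalIntegral.norm_integral_le_of_norm_le_const (a := -T) (b := T) fun t _ => hB t
  rw [intervalMean, norm_smul, Real.norm_of_nonneg (by positivity)]
  calc (2 * T)⁻¹ * ‖∫ t in -T..T, φ t‖ ≤ (2 * T)⁻¹ * (B * (2 * T)) := by gcongr
    _ = B := by field_simp

lemma norm_le_of_tendsto_intervalMean {φ : ℝ → V} {B : ℝ} {v : V} (hB : ∀ t, ‖φ t‖ ≤ B)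
    (h : Tendsto (intervalMean φ) atTop (𝓝 v)) : ‖v‖ ≤ B :=
  le_of_tendsto h.norm <| (eventually_gt_atTop 0).mono fun _ hT => norm_intervalMean_le hB hT

lemma norm_intervalMean_cexp_le {μ T : ℝ} (hμ : μ ≠ 0) (hT : 0 < T) :
    ‖intervalMean (fun t : ℝ => Complex.exp (μ * t * Complex.I)) T‖ ≤ (|μ| * T)⁻¹ := by
  have hc : (μ * Complex.I : ℂ) ≠ 0 := mul_ne_zero (by exact_mod_cast hμ) Complex.I_ne_zero
  have hint : ∫ t in -T..T, Complex.exp (μ * t * Complex.I) =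
      (Complex.exp (μ * Complex.I * T) - Complex.exp (μ * Complex.I * (-T : ℝ))) /
        (μ * Complex.I) := by
    simp_rw [mul_right_comm _ _ Complex.I]
    exact integral_exp_mul_complex hc
  have hnum :
      ‖Complex.exp (μ * Complex.I * T) - Complex.exp (μ * Complex.I * (-T : ℝ))‖ ≤ 2 := by
    refine (norm_sub_le _ _).trans_eq ?_
    simp_rw [mul_right_comm _ Complex.I, ← Complex.ofReal_mul, Complex.norm_exp_ofReal_mul_I]
    norm_num
  have hden : ‖(μ * Complex.I : ℂ)‖ = |μ| := by simp
  have hμ' : 0 < |μ| := abs_pos.2 hμ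
  rw [intervalMean, hint, norm_smul, norm_div, Real.norm_of_nonneg (by positivity), hden]
  calc (2 * T)⁻¹ * (‖Complex.exp (μ * Complex.I * T) -
        Complex.exp (μ * Complex.I * (-T : ℝ))‖ / |μ|) ≤ (2 * T)⁻¹ * (2 / |μ|) := by gcongr
    _ = (|μ| * T)⁻¹ := by field_simp

lemma tendsto_intervalMean_cexp {μ : ℝ} (hμ : μ ≠ 0) :
    Tendsto (intervalMean fun t : ℝ => Complex.exp (μ * t * Complex.I)) atTop (𝓝 0) := by
  have hlim : Tendsto (fun T : ℝ => (|μ| * T)⁻¹) atTop (𝓝 0) :=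
    tendsto_inv_atTop_zero.comp (tendsto_id.const_mul_atTop (abs_pos.2 hμ))
  refine squeeze_zero_norm' ?_ hlim
  filter_upwards [eventually_gt_atTop 0] with T hT using norm_intervalMean_cexp_le hμ hT

variable [NormedSpace ℂ V] [CompleteSpace V]

lemma intervalMean_tsum_cexp_smul {c : ℕ → V} (hc : Summable fun n => ‖c n‖) (μ : ℕ → ℝ)
    (T : ℝ) :
    intervalMean (fun t : ℝ => ∑' n, Complex.exp (μ n * t * Complex.I) • c n) T =
      ∑' n, intervalMean (fun t : ℝ => Complex.exp (μ n * t * Complex.I)) T • c n := by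
  have hsum := intervalIntegral.hasSum_integral_of_dominated_convergence (a := -T) (b := T)
    (μ := MeasureTheory.volume)
    (F := fun n (t : ℝ) => Complex.exp (μ n * t * Complex.I) • c n) (fun n _ => ‖c n‖)
    (fun n => (Continuous.smul (by fun_prop) continuous_const).aestronglyMeasurable)
    (fun n => .of_forall fun t _ => by
      rw [norm_smul, norm_cexp_ofReal_mul_ofReal_mul_I, one_mul])
    (.of_forall fun _ _ => hc) intervalIntegrable_const
    (.of_forall fun _ _ => (Summable.of_norm_bounded hc fun n => by
      rw [norm_smul, norm_cexp_ofReal_mul_ofReal_mul_I, one_mul]).hasSum)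
  simp_rw [intervalIntegral.integral_smul_const] at hsum
  simp_rw [intervalMean, ← hsum.tsum_eq, smul_assoc]
  exact (Summable.tsum_const_smul _ hsum.summable).symm

lemma tendsto_intervalMean_tsum_cexp_smul {c : ℕ → V} (hc : Summable fun n => ‖c n‖)
    {μ : ℕ → ℝ} {N : ℕ} (hN : μ N = 0) (hμ : ∀ n, μ n = 0 → n = N) :
    Tendsto (intervalMean fun t : ℝ => ∑' n, Complex.exp (μ n * t * Complex.I) • c n) atTop
      (𝓝 (c N)) := by
  have hterm : ∀ n, Tendsto
      (fun T => intervalMean (fun t : ℝ => Complex.exp (μ n * t * Complex.I)) T • c n) atTop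
      (𝓝 (if n = N then c N else 0)) := by
    intro n
    split_ifs with hn
    · subst hn
      refine tendsto_const_nhds.congr' ?_
      filter_upwards [eventually_gt_atTop 0] with T hT
      have hT' : (T : ℂ) ≠ 0 := by exact_mod_cast hT.ne'
      simp [hN, intervalMean]
      field_simp
      norm_num
    · simpa using (tendsto_intervalMean_cexp fun h => hn (hμ n h)).smul_const (c n)
  have hbound : ∀ᶠ T in atTop, ∀ n,
      ‖intervalMean (fun t : ℝ => Complex.exp (μ n * t * Complex.I)) T • c n‖ ≤ ‖c n‖ := by
    filter_upwards [eventually_gt_atTop 0] with T hT n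
    rw [norm_smul]
    exact mul_le_of_le_one_left (norm_nonneg _)
      (norm_intervalMean_le (fun t => (norm_cexp_ofReal_mul_ofReal_mul_I _ t).le) hT)
  refine Tendsto.congr (fun T => (intervalMean_tsum_cexp_smul hc μ T).symm) ?_
  simpa only [tsum_ite_eq] using tendsto_tsum_of_dominated_convergence hc hterm hbound

end IntervalMean

lemma abs_ciSup_sub_ciSup_le {ι : Type*} [Nonempty ι] {u v : ι → ℝ}
    (hu : BddAbove (Set.range u)) (hv : BddAbove (Set.range v)) {C : ℝ}
    (h : ∀ i, |u i - v i| ≤ C) : |(⨆ i, u i) - ⨆ i, v i| ≤ C := by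
  refine abs_sub_le_iff.2 ⟨sub_le_iff_le_add.2 (ciSup_le fun i => ?_),
    sub_le_iff_le_add.2 (ciSup_le fun i => ?_)⟩
  · linarith [le_ciSup hv i, (abs_sub_le_iff.1 (h i)).1]
  · linarith [le_ciSup hu i, (abs_sub_le_iff.1 (h i)).2]

namespace VVDS

variable (f : VVDS E)

def majorant (σ : ℝ) : ℝ := ∑' n, Real.exp (σ * f.lam n) * ‖f.a n‖

lemma summable_majorant (σ : ℝ) : Summable fun n => Real.exp (σ * f.lam n) * ‖f.a n‖ := by
  simpa using f.abs_conv σ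

lemma majorant_mono : Monotone f.majorant := fun _ _ hxy =>
  (f.summable_majorant _).tsum_le_tsum (fun n => by gcongr; exact (f.lam_pos n).le)
    (f.summable_majorant _)

lemma continuous_majorant : Continuous f.majorant := by
  refine continuous_iff_continuousAt.2 fun σ => ?_
  have hon : ContinuousOn f.majorant (Set.Iio (σ + 1)) := by
    refine continuousOn_tsum (fun n => by fun_prop) (f.summable_majorant (σ + 1))
      fun n x hx => ?_
    rw [Real.norm_of_nonneg (by positivity)]
    gcongr
    · exact (f.lam_pos n).le
    · exact le_of_lt hx
  exact hon.continuousAt (Iio_mem_nhds (lt_add_one σ))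

lemma cexp_line_mul (σ t l : ℝ) :
    Complex.exp ((σ + t * Complex.I) * l) =
      Real.exp (σ * l) * Complex.exp (l * t * Complex.I) := by
  rw [Complex.ofReal_exp, ← Complex.exp_add]
  push_cast
  ring_nf

lemma norm_term_line (σ t : ℝ) (n : ℕ) :
    ‖Complex.exp ((σ + t * Complex.I) * f.lam n) • f.a n‖ =
      Real.exp (σ * f.lam n) * ‖f.a n‖ := by
  rw [norm_smul, cexp_line_mul, norm_mul, norm_cexp_ofReal_mul_ofReal_mul_I, Complex.norm_real,
    Real.norm_of_nonneg (Real.exp_pos _).le, mul_one]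

lemma norm_toFun_le_majorant (σ t : ℝ) : ‖f.toFun (σ + t * Complex.I)‖ ≤ f.majorant σ :=
  tsum_of_norm_bounded (f.summable_majorant σ).hasSum fun n => (f.norm_term_line σ t n).le

lemma norm_toFun_sub_le {x y : ℝ} (hxy : x ≤ y) (t : ℝ) :
    ‖f.toFun (y + t * Complex.I) - f.toFun (x + t * Complex.I)‖ ≤
      f.majorant y - f.majorant x := by
  have hs : ∀ σ : ℝ, Summable fun n => Complex.exp ((σ + t * Complex.I) * f.lam n) • f.a n :=
    fun σ => .of_norm_bounded (f.summable_majorant σ) fun n => (f.norm_term_line σ t n).le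
  rw [toFun, toFun, ← (hs y).tsum_sub (hs x)]
  refine tsum_of_norm_bounded (((f.summable_majorant y).hasSum).sub
    (f.summable_majorant x).hasSum) fun n => ?_
  rw [← sub_smul, cexp_line_mul, cexp_line_mul, ← sub_mul, norm_smul, norm_mul,
    norm_cexp_ofReal_mul_ofReal_mul_I, mul_one, ← Complex.ofReal_sub, Complex.norm_real,
    Real.norm_of_nonneg (sub_nonneg.2 (Real.exp_le_exp.2 (by gcongr; exact (f.lam_pos n).le))),
    sub_mul]

lemma bddAbove_norm_line (σ : ℝ) :
    BddAbove (Set.range fun t : ℝ => ‖f.toFun (σ + t * Complex.I)‖) :=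
  ⟨f.majorant σ, Set.forall_mem_range.2 (f.norm_toFun_le_majorant σ)⟩

lemma norm_toFun_le_M (σ t : ℝ) : ‖f.toFun (σ + t * Complex.I)‖ ≤ f.M σ :=
  le_ciSup (f.bddAbove_norm_line σ) t

lemma M_le_majorant (σ : ℝ) : f.M σ ≤ f.majorant σ :=
  ciSup_le (f.norm_toFun_le_majorant σ)

lemma dist_M_le_dist_majorant (x y : ℝ) :
    dist (f.M x) (f.M y) ≤ dist (f.majorant x) (f.majorant y) := by
  wlog hxy : x ≤ y generalizing x y
  · rw [dist_comm, dist_comm (f.majorant x)]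
    exact this y x (le_of_not_ge hxy)
  rw [dist_comm, Real.dist_eq, Real.dist_eq, abs_sub_comm (f.majorant x),
    abs_of_nonneg (sub_nonneg.2 (f.majorant_mono hxy))]
  refine abs_ciSup_sub_ciSup_le (f.bddAbove_norm_line y) (f.bddAbove_norm_line x) fun t => ?_
  exact (abs_norm_sub_norm_le _ _).trans (f.norm_toFun_sub_le hxy t)

lemma continuous_M : Continuous f.M :=
  Metric.continuous_iff.2 fun y ε hε =>
    let ⟨δ, hδ, h⟩ := Metric.continuous_iff.1 f.continuous_majorant y ε hε
    ⟨δ, hδ, fun x hx => (f.dist_M_le_dist_majorant x y).trans_lt (h x hx)⟩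

lemma exp_mul_norm_coeff_le_M (σ : ℝ) (N : ℕ) : Real.exp (σ * f.lam N) * ‖f.a N‖ ≤ f.M σ := by
  set c : ℕ → E := fun n => Real.exp (σ * f.lam n) • f.a n
  have hc : Summable fun n => ‖c n‖ := by
    simpa [c, norm_smul, Real.norm_of_nonneg (Real.exp_pos _).le] using f.summable_majorant σ
  -- Multiplying by `e^{-i t λ_N}` moves the frequency of the `N`-th term to zero.
  have hshift : ∀ t : ℝ,
      Complex.exp ((-f.lam N : ℝ) * t * Complex.I) • f.toFun (σ + t * Complex.I) =
        ∑' n, Complex.exp ((f.lam n - f.lam N : ℝ) * t * Complex.I) • c n := by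
    intro t
    rw [toFun, ← Summable.tsum_const_smul _ (.of_norm_bounded (f.summable_majorant σ)
      fun n => (f.norm_term_line σ t n).le)]
    refine tsum_congr fun n => ?_
    simp only [c, ← Complex.coe_smul, smul_smul, cexp_line_mul]
    rw [mul_left_comm, ← Complex.exp_add, mul_comm]
    congr 3
    push_cast
    ring
  have hmean := tendsto_intervalMean_tsum_cexp_smul hc (μ := fun n => f.lam n - f.lam N)
    (sub_self _) fun n hn => f.lam_strictMono.injective (sub_eq_zero.1 hn)
  rw [← funext hshift] at hmean
  calc Real.exp (σ * f.lam N) * ‖f.a N‖ = ‖c N‖ := by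
        rw [norm_smul, Real.norm_of_nonneg (Real.exp_pos _).le]
    _ ≤ f.M σ := norm_le_of_tendsto_intervalMean (fun t => by
        rw [norm_smul, norm_cexp_ofReal_mul_ofReal_mul_I, one_mul]
        exact f.norm_toFun_le_M σ t) hmean

lemma exists_coeff_ne_zero : ∃ N, f.a N ≠ 0 := by
  obtain ⟨N, hN⟩ := (f.coeff_decay.eventually_le_atBot (-1)).exists
  refine ⟨N, fun h0 => ?_⟩
  norm_num [h0] at hN

lemma tendsto_M_atTop : Tendsto f.M atTop atTop := by
  obtain ⟨N, hN⟩ := f.exists_coeff_ne_zero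
  refine tendsto_atTop_mono (f.exp_mul_norm_coeff_le_M · N) ?_
  exact (Real.tendsto_exp_atTop.comp (tendsto_id.atTop_mul_const (f.lam_pos N))).atTop_mul_const
    (norm_pos_iff.2 hN)

lemma lt_of_majorant_lt_M {b σ : ℝ} (h : f.majorant b < f.M σ) : b < σ := by
  contrapose! h
  exact (f.M_le_majorant σ).trans (f.majorant_mono h)

lemma le_Minv {b y : ℝ} (hb : f.majorant b < y) : b ≤ f.Minv y :=
  le_csInf (f.tendsto_M_atTop.eventually_ge_atTop y).exists fun _ hσ =>
    (f.lt_of_majorant_lt_M (hb.trans_le hσ)).le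

lemma tendsto_Minv_atTop : Tendsto f.Minv atTop atTop :=
  tendsto_atTop.2 fun b => (eventually_gt_atTop (f.majorant b)).mono fun _ => f.le_Minv

lemma M_Minv {y : ℝ} (hy : f.majorant 0 < y) : f.M (f.Minv y) = y := by
  have hne : {σ | y ≤ f.M σ}.Nonempty := (f.tendsto_M_atTop.eventually_ge_atTop y).exists
  have hbdd : BddBelow {σ | y ≤ f.M σ} :=
    ⟨0, fun _ hσ => (f.lt_of_majorant_lt_M (hy.trans_le hσ)).le⟩
  refine le_antisymm ?_ ((isClosed_le continuous_const f.continuous_M).csInf_mem hne hbdd)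
  refine le_of_tendsto (f.continuous_M.continuousAt.mono_left
    (nhdsWithin_le_nhds (s := Set.Iio (f.Minv y))))
    (eventually_nhdsWithin_of_forall fun σ hσ => ?_)
  exact (not_le.1 (notMem_of_lt_csInf (s := {σ | y ≤ f.M σ}) hσ hbdd)).le

end VVDS

lemma tendsto_iterate_log_atTop (k : ℕ) : Tendsto (Real.log^[k]) atTop atTop := by
  induction k with
  | zero => exact tendsto_id
  | succ k ih =>
    rw [Function.iterate_succ]
    exact ih.comp Real.tendsto_log_atTop

section LimsupComparison

variable {α : Type*} {L : Filter α} {u v : α → ℝ}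

lemma eventually_mul_lt_of_lt_liminf_div (hv : ∀ᶠ x in L, 0 < v x) {l : ℝ}
    (hl : (l : EReal) < liminf (fun x => ((u x / v x : ℝ) : EReal)) L) :
    ∀ᶠ x in L, l * v x < u x := by
  filter_upwards [eventually_lt_of_lt_liminf hl, hv] with x hx hvx
  exact (lt_div_iff₀ hvx).1 (EReal.coe_lt_coe_iff.1 hx)

lemma eventually_lt_mul_of_limsup_div_lt (hv : ∀ᶠ x in L, 0 < v x) {r : ℝ}
    (hr : limsup (fun x => ((u x / v x : ℝ) : EReal)) L < r) :
    ∀ᶠ x in L, u x < r * v x := by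
  filter_upwards [eventually_lt_of_limsup_lt hr, hv] with x hx hvx
  exact (div_lt_iff₀ hvx).1 (EReal.coe_lt_coe_iff.1 hx)

variable [L.NeBot] {c : ℝ}

lemma limsup_coe_le_mul (hc : 0 ≤ c) (h : ∀ᶠ x in L, u x ≤ c * v x) :
    limsup (fun x => (u x : EReal)) L ≤ c * limsup (fun x => (v x : EReal)) L := by
  rw [← EReal.limsup_const_mul_of_nonneg_of_ne_top (EReal.coe_nonneg.2 hc) (EReal.coe_ne_top c)]
  exact limsup_le_limsup (h.mono fun x hx => EReal.coe_le_coe_iff.2 hx)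

lemma liminf_coe_le_mul (hc : 0 ≤ c) (h : ∀ᶠ x in L, u x ≤ c * v x) :
    liminf (fun x => (u x : EReal)) L ≤ c * liminf (fun x => (v x : EReal)) L := by
  rw [← EReal.liminf_const_mul_of_nonneg_of_ne_top (EReal.coe_nonneg.2 hc) (EReal.coe_ne_top c)]
  exact liminf_le_liminf (h.mono fun x hx => EReal.coe_le_coe_iff.2 hx)

lemma limsup_coe_eq_zero_of_mul_le (hc : 0 < c) (hu : ∀ᶠ x in L, 0 ≤ u x)
    (h : ∀ᶠ x in L, c * u x ≤ v x) (hv : limsup (fun x => (v x : EReal)) L = 0) :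
    limsup (fun x => (u x : EReal)) L = 0 := by
  refine le_antisymm ?_ (le_limsup_of_frequently_le (hu.mono fun x hx => ?_).frequently)
  · simpa [hv] using limsup_coe_le_mul (inv_nonneg.2 hc.le)
      (h.mono fun x hx => (le_inv_mul_iff₀ hc).2 hx)
  · exact_mod_cast hx

lemma liminf_coe_eq_zero_of_mul_le (hc : 0 < c) (hu : ∀ᶠ x in L, 0 ≤ u x)
    (h : ∀ᶠ x in L, c * u x ≤ v x) (hv : liminf (fun x => (v x : EReal)) L = 0) :
    liminf (fun x => (u x : EReal)) L = 0 := by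
  refine le_antisymm ?_ (le_liminf_of_le (by isBoundedDefault) (hu.mono fun x hx => ?_))
  · simpa [hv] using liminf_coe_le_mul (inv_nonneg.2 hc.le)
      (h.mono fun x hx => (le_inv_mul_iff₀ hc).2 hx)
  · exact_mod_cast hx

lemma limsup_coe_eq_top_of_le_mul (hc : 0 ≤ c) (h : ∀ᶠ x in L, v x ≤ c * u x)
    (hv : limsup (fun x => (v x : EReal)) L = ⊤) : limsup (fun x => (u x : EReal)) L = ⊤ := by
  have := limsup_coe_le_mul hc h
  have hc' : ¬ (c : EReal) < 0 := by exact_mod_cast hc.not_gt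
  rw [hv, top_le_iff, EReal.mul_eq_top] at this
  aesop

lemma liminf_coe_eq_top_of_le_mul (hc : 0 ≤ c) (h : ∀ᶠ x in L, v x ≤ c * u x)
    (hv : liminf (fun x => (v x : EReal)) L = ⊤) : liminf (fun x => (u x : EReal)) L = ⊤ := by
  have := liminf_coe_le_mul hc h
  have hc' : ¬ (c : EReal) < 0 := by exact_mod_cast hc.not_gt
  rw [hv, top_le_iff, EReal.mul_eq_top] at this
  aesop

end LimsupComparison

section RelativeOrder

variable (p q : ℕ) (f : VVDS E) (g : VVDS F)

def relRittRatio (σ : ℝ) : ℝ := Real.log^[p] (g.Minv (f.M σ)) / Real.log^[q] σ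

lemma tendsto_Minv_M : Tendsto (fun σ => g.Minv (f.M σ)) atTop atTop :=
  g.tendsto_Minv_atTop.comp f.tendsto_M_atTop

lemma eventually_M_Minv_M : ∀ᶠ σ in atTop, g.M (g.Minv (f.M σ)) = f.M σ :=
  (f.tendsto_M_atTop.eventually_gt_atTop (g.majorant 0)).mono fun _ => g.M_Minv

lemma eventually_relRittRatio_nonneg : ∀ᶠ σ in atTop, 0 ≤ relRittRatio p q f g σ := by
  filter_upwards [(tendsto_Minv_M f g).eventually
      ((tendsto_iterate_log_atTop p).eventually_ge_atTop 0),
    (tendsto_iterate_log_atTop q).eventually_ge_atTop 0] with σ hp hq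
  exact div_nonneg hp hq

variable {p} (m : ℕ) (h : VVDS G)

-- Eventually `Minv_h ∘ M_f = (Minv_h ∘ M_g) ∘ (Minv_g ∘ M_f)`, and `Minv_g ∘ M_f → ∞`.
lemma eventually_mul_relRittRatio_le {l : ℝ} (hl : (l : EReal) < relRittLowerOrder m p g h) :
    ∀ᶠ σ in atTop, l * relRittRatio p q f g σ ≤ relRittRatio m q f h σ := by
  have hx : ∀ᶠ x in atTop, l * Real.log^[p] x < Real.log^[m] (h.Minv (g.M x)) :=
    eventually_mul_lt_of_lt_liminf_div ((tendsto_iterate_log_atTop p).eventually_gt_atTop 0) hl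
  filter_upwards [(tendsto_Minv_M f g).eventually hx, eventually_M_Minv_M f g,
    (tendsto_iterate_log_atTop q).eventually_gt_atTop 0] with σ hσ hM hq
  rw [hM] at hσ
  rw [relRittRatio, relRittRatio, mul_div_assoc']
  exact div_le_div_of_nonneg_right hσ.le hq.le

lemma eventually_relRittRatio_le_mul {r : ℝ} (hr : relRittOrder m p g h < r) :
    ∀ᶠ σ in atTop, relRittRatio m q f h σ ≤ r * relRittRatio p q f g σ := by
  have hx : ∀ᶠ x in atTop, Real.log^[m] (h.Minv (g.M x)) < r * Real.log^[p] x :=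
    eventually_lt_mul_of_limsup_div_lt ((tendsto_iterate_log_atTop p).eventually_gt_atTop 0) hr
  filter_upwards [(tendsto_Minv_M f g).eventually hx, eventually_M_Minv_M f g,
    (tendsto_iterate_log_atTop q).eventually_gt_atTop 0] with σ hσ hM hq
  rw [hM] at hσ
  rw [relRittRatio, relRittRatio, mul_div_assoc']
  exact div_le_div_of_nonneg_right hσ.le hq.le

end RelativeOrder

theorem stmt_8_general (f : VVDS E) (g : VVDS F) (h : VVDS G) (p q m : ℕ)
    (hg1 : (0 : EReal) < relRittLowerOrder m p g h)
    (hg3 : relRittOrder m p g h < ⊤)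
    :
    (relRittOrder m q f h = 0 → relRittOrder p q f g = 0) ∧ (relRittLowerOrder m q f h = 0 → relRittLowerOrder p q f g = 0) ∧ (relRittOrder m q f h = ⊤ → relRittOrder p q f g = ⊤) ∧ (relRittLowerOrder m q f h = ⊤ → relRittLowerOrder p q f g = ⊤) := by
  obtain ⟨l, hl0, hl⟩ := EReal.exists_between_coe_real hg1
  obtain ⟨r, hr, -⟩ := EReal.exists_between_coe_real hg3
  have hl_pos : 0 < l := EReal.coe_pos.1 hl0
  have hr_nonneg : 0 ≤ r :=
    EReal.coe_nonneg.1 (hl0.trans (hl.trans ((liminf_le_limsup (f := atTop)).trans_lt hr))).le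
  have hnonneg := eventually_relRittRatio_nonneg p q f g
  have hlow := eventually_mul_relRittRatio_le q f g m h hl
  have hup := eventually_relRittRatio_le_mul q f g m h hr
  exact ⟨limsup_coe_eq_zero_of_mul_le hl_pos hnonneg hlow,
    liminf_coe_eq_zero_of_mul_le hl_pos hnonneg hlow,
    limsup_coe_eq_top_of_le_mul hr_nonneg hup, liminf_coe_eq_top_of_le_mul hr_nonneg hup⟩

theorem stmt_8 (f : VVDS E) (g : VVDS F) (h : VVDS G) (p q m : ℕ)
    (hg1 : (0 : EReal) < relRittLowerOrder m p g h)
    (hg2 : relRittLowerOrder m p g h ≤ relRittOrder m p g h)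
    (hg3 : relRittOrder m p g h < ⊤)
    :
    (relRittOrder m q f h = 0 → relRittOrder p q f g = 0) ∧ (relRittLowerOrder m q f h = 0 → relRittLowerOrder p q f g = 0) ∧ (relRittOrder m q f h = ⊤ → relRittOrder p q f g = ⊤) ∧ (relRittLowerOrder m q f h = ⊤ → relRittLowerOrder p q f g = ⊤) :=
  stmt_8_general f g h p q m hg1 hg3
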